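/- If a finite simplicial complex K admits a discrete Morse matching with exactly one critical cell (necessarily a vertex), then K is collapsible. -/

import Mathlib

open Finset
set_option linter.unusedSectionVars false

variable {V : Type*} [DecidableEq V]


/-- A (finite abstract) simplicial complex, given by its finset of faces:
all faces are nonempty and the collection is closed under nonempty subsets. -/
def IsComplex (S : Finset (Finset V)) : Prop :=
  ∀ F ∈ S, F.Nonempty ∧ ∀ G ⊆ F, G.Nonempty → G ∈ S

/-- `σ` is a free face of `S`: it is properly contained in exactly one face `τ`,
which is moreover a facet. -/
def IsFreePair (S : Finset (Finset V)) (σ τ : Finset V) : Prop :=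
  σ ∈ S ∧ τ ∈ S ∧ σ ⊂ τ ∧ (∀ ρ ∈ S, σ ⊂ ρ → ρ = τ) ∧ ∀ ρ ∈ S, ¬ τ ⊂ ρ

/-- `Collapses S T`: `S` reduces to `T` by a finite sequence of elementary collapses,
each removing a free face together with the unique facet containing it. -/
inductive Collapses : Finset (Finset V) → Finset (Finset V) → Prop
  | refl (S : Finset (Finset V)) : Collapses S S
  | step {S T : Finset (Finset V)} (σ τ : Finset V) :
      IsFreePair S σ τ → Collapses (S \ {σ, τ}) T → Collapses S T

/-- A complex is collapsible if it collapses to a single vertex. -/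
def Collapsible (S : Finset (Finset V)) : Prop :=
  ∃ v : V, Collapses S {({v} : Finset V)}

/-- A discrete Morse matching: an acyclic partial matching on the Hasse diagram
of `S`, pairing faces whose dimensions differ by one. -/
structure MorseMatching (S : Finset (Finset V)) where
  M : Finset (Finset V × Finset V)
  mem_left : ∀ p ∈ M, p.1 ∈ S
  mem_right : ∀ p ∈ M, p.2 ∈ S
  cover : ∀ p ∈ M, p.1 ⊂ p.2 ∧ p.2.card = p.1.card + 1
  matching : ∀ p ∈ M, ∀ q ∈ M, p ≠ q →
    p.1 ≠ q.1 ∧ p.2 ≠ q.2 ∧ p.1 ≠ q.2 ∧ p.2 ≠ q.1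
  /-- The modified Hasse diagram (matched pairs pointing up, unmatched cover
  relations pointing down) has no directed cycle. -/
  acyclic : ∀ σ : Finset V, ¬ Relation.TransGen
      (fun x y => (x, y) ∈ M ∨
        ((y, x) ∉ M ∧ y ⊂ x ∧ x.card = y.card + 1 ∧ x ∈ S ∧ y ∈ S)) σ σ

/-- A face is critical for a matching if it is unmatched. -/
def MorseMatching.Critical {S : Finset (Finset V)} (mm : MorseMatching S)
    (F : Finset V) : Prop :=
  F ∈ S ∧ ∀ p ∈ mm.M, p.1 ≠ F ∧ p.2 ≠ F

open scoped Classical in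
/-- The finset of critical (unmatched) cells of a matching. -/
noncomputable def MorseMatching.criticalCells {S : Finset (Finset V)}
    (mm : MorseMatching S) : Finset (Finset V) :=
  S.filter fun F => ∀ p ∈ mm.M, p.1 ≠ F ∧ p.2 ≠ F

open scoped Classical in
/-- `c_i`: the number of critical `i`-dimensional cells. -/
noncomputable def MorseMatching.critCount {S : Finset (Finset V)}
    (mm : MorseMatching S) (i : ℕ) : ℕ :=
  (mm.criticalCells.filter fun F => F.card = i + 1).card

/-! Acyclicity turns the matching into a gradient flow that cannot cycle. Every vertex is matched
upwards to an edge, whose other endpoint is again a vertex, unless some vertex is critical; so the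
critical cell is a vertex `v`. If `S ≠ {{v}}`, every face of top dimension is matched downwards,
and the partner `σ` of at least one of them is a free face: otherwise, passing from each top face
through its partner to another top face containing it produces a cycle. Collapsing that pair
leaves a complex with the restricted matching and the same single critical cell. -/

open Relation

theorem exists_forall_not_transGen {α : Type*} {R : α → α → Prop}
    (hR : ∀ x, ¬ TransGen R x x) {X : Finset α} (hX : X.Nonempty) :
    ∃ x ∈ X, ∀ y ∈ X, ¬ TransGen R x y := by
  let r : X → X → Prop := fun a b => TransGen R b a
  have : IsTrans X r := ⟨fun _ _ _ hab hbc => hbc.trans hab⟩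
  have : Std.Irrefl r := ⟨fun a => hR a⟩
  obtain ⟨x, -, hx⟩ :=
    (Finite.wellFounded_of_trans_of_irrefl r).has_min Set.univ ⟨⟨_, hX.choose_spec⟩, trivial⟩
  exact ⟨x, x.2, fun y hy hxy => hx ⟨y, hy⟩ trivial hxy⟩

/-- The relation whose acyclicity is the field `MorseMatching.acyclic`. -/
def modifiedHasse (S : Finset (Finset V)) (M : Finset (Finset V × Finset V)) :
    Finset V → Finset V → Prop :=
  fun x y => (x, y) ∈ M ∨ ((y, x) ∉ M ∧ y ⊂ x ∧ x.card = y.card + 1 ∧ x ∈ S ∧ y ∈ S)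

theorem IsComplex.sdiff_of_isFreePair {S : Finset (Finset V)} (hS : IsComplex S) {σ τ : Finset V}
    (hστ : IsFreePair S σ τ) : IsComplex (S \ {σ, τ}) := by
  obtain ⟨-, -, -, hunique, hfacet⟩ := hστ
  intro F hF
  simp only [mem_sdiff, mem_insert, mem_singleton, not_or] at hF ⊢
  obtain ⟨hFS, hFσ, hFτ⟩ := hF
  refine ⟨(hS F hFS).1, fun G hGF hG => ⟨(hS F hFS).2 G hGF hG, ?_, ?_⟩⟩
  · rintro rfl
    exact hFτ (hunique F hFS (hGF.lt_of_ne fun h => hFσ h.symm))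
  · rintro rfl
    exact hfacet F hFS (hGF.lt_of_ne fun h => hFτ h.symm)

namespace MorseMatching

variable {S : Finset (Finset V)} (mm : MorseMatching S)

theorem not_transGen_self (F : Finset V) : ¬ TransGen (modifiedHasse S mm.M) F F :=
  mm.acyclic F

theorem fst_eq_of_mem {σ σ' τ : Finset V} (h : (σ, τ) ∈ mm.M) (h' : (σ', τ) ∈ mm.M) : σ = σ' := by
  by_contra hne
  exact (mm.matching _ h _ h' fun hp => hne (congrArg Prod.fst hp)).2.1 rfl

theorem snd_eq_of_mem {σ τ τ' : Finset V} (h : (σ, τ) ∈ mm.M) (h' : (σ, τ') ∈ mm.M) : τ = τ' := by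
  by_contra hne
  exact (mm.matching _ h _ h' fun hp => hne (congrArg Prod.snd hp)).1 rfl

theorem cover_of_mem {σ τ : Finset V} (h : (σ, τ) ∈ mm.M) : σ ⊂ τ ∧ τ.card = σ.card + 1 :=
  mm.cover _ h

theorem criticalCells_subset : mm.criticalCells ⊆ S := filter_subset _ _

theorem mem_criticalCells {F : Finset V} :
    F ∈ mm.criticalCells ↔ F ∈ S ∧ ∀ p ∈ mm.M, p.1 ≠ F ∧ p.2 ≠ F := by
  classical
  simp [criticalCells]

def erasePair {σ τ : Finset V} (hστ : (σ, τ) ∈ mm.M) : MorseMatching (S \ {σ, τ}) where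
  M := mm.M.erase (σ, τ)
  mem_left p hp := by
    have := mm.matching p (mem_of_mem_erase hp) _ hστ (ne_of_mem_erase hp)
    simp only [mem_sdiff, mem_insert, mem_singleton, not_or]
    exact ⟨mm.mem_left p (mem_of_mem_erase hp), this.1, this.2.2.1⟩
  mem_right p hp := by
    have := mm.matching p (mem_of_mem_erase hp) _ hστ (ne_of_mem_erase hp)
    simp only [mem_sdiff, mem_insert, mem_singleton, not_or]
    exact ⟨mm.mem_right p (mem_of_mem_erase hp), this.2.2.2, this.2.1⟩
  cover p hp := mm.cover p (mem_of_mem_erase hp)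
  matching p hp q hq := mm.matching p (mem_of_mem_erase hp) q (mem_of_mem_erase hq)
  acyclic F hF := mm.not_transGen_self F <| TransGen.mono (fun x y hxy => by
    rcases hxy with hxy | ⟨hyx, hyx', hcard, hx, hy⟩
    · exact Or.inl (mem_of_mem_erase hxy)
    · refine Or.inr ⟨fun hM => hyx (mem_erase.mpr ⟨?_, hM⟩), hyx', hcard,
        (mem_sdiff.mp hx).1, (mem_sdiff.mp hy).1⟩
      rintro ⟨-, rfl⟩
      simp at hx) F F hF

theorem criticalCells_erasePair {σ τ : Finset V} (hστ : (σ, τ) ∈ mm.M) :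
    (mm.erasePair hστ).criticalCells = mm.criticalCells := by
  ext F
  simp only [mem_criticalCells, erasePair, mem_sdiff, mem_insert, mem_singleton, not_or,
    mem_erase]
  constructor
  · rintro ⟨⟨hF, hFσ, hFτ⟩, hcrit⟩
    refine ⟨hF, fun p hp => ?_⟩
    by_cases hpστ : p = (σ, τ)
    · subst hpστ
      exact ⟨Ne.symm hFσ, Ne.symm hFτ⟩
    · exact hcrit p ⟨hpστ, hp⟩
  · rintro ⟨hF, hcrit⟩
    exact ⟨⟨hF, fun h => (hcrit _ hστ).1 h.symm, fun h => (hcrit _ hστ).2 h.symm⟩,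
      fun p hp => hcrit p hp.2⟩

theorem exists_mem_of_notMem_criticalCells {F : Finset V} (hF : F ∈ S)
    (hcrit : F ∉ mm.criticalCells) : ∃ G, (F, G) ∈ mm.M ∨ (G, F) ∈ mm.M := by
  simp only [mem_criticalCells, hF, true_and, not_forall, not_and_or, not_not] at hcrit
  obtain ⟨⟨G, H⟩, hp, rfl | rfl⟩ := hcrit
  exacts [⟨H, Or.inl hp⟩, ⟨G, Or.inr hp⟩]

theorem criticalCells_eq_self_of_card_le_one (hS : IsComplex S) (hdim : ∀ F ∈ S, F.card ≤ 1) :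
    mm.criticalCells = S := by
  refine mm.criticalCells_subset.antisymm fun F hF =>
    mm.mem_criticalCells.mpr ⟨hF, fun p hp => absurd (mm.cover p hp).2 ?_⟩
  have := card_pos.mpr (hS p.1 (mm.mem_left p hp)).1
  have := hdim p.2 (mm.mem_right p hp)
  omega

theorem exists_singleton_mem_criticalCells (hS : IsComplex S) (hne : S.Nonempty) :
    ∃ v, {v} ∈ mm.criticalCells := by
  by_contra! hcrit
  set X := S.filter fun F => F.card = 1
  have hX : X.Nonempty := by
    obtain ⟨F, hF⟩ := hne
    obtain ⟨v, hv⟩ := (hS F hF).1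
    exact ⟨{v}, mem_filter.mpr
      ⟨(hS F hF).2 _ (singleton_subset_iff.mpr hv) (singleton_nonempty v), card_singleton v⟩⟩
  obtain ⟨w, hw, hlast⟩ := exists_forall_not_transGen mm.not_transGen_self hX
  obtain ⟨hwS, hw1⟩ := mem_filter.mp hw
  obtain ⟨v, rfl⟩ := card_eq_one.mp hw1
  obtain ⟨e, he⟩ : ∃ e, ({v}, e) ∈ mm.M := by
    obtain ⟨G, hG | hG⟩ := mm.exists_mem_of_notMem_criticalCells hwS (hcrit v)
    · exact ⟨G, hG⟩
    · have hcard := (mm.cover_of_mem hG).2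
      have := card_pos.mpr (hS G (mm.mem_left _ hG)).1
      rw [card_singleton] at hcard
      omega
  have heS := mm.mem_right _ he
  obtain ⟨hve, hecard⟩ := mm.cover_of_mem he
  have hu1 : (e \ {v}).card = 1 := by
    rw [card_sdiff_of_subset hve.subset, hecard, card_singleton]
  have huS : e \ {v} ∈ S := (hS e heS).2 _ sdiff_subset (card_pos.mp (by omega))
  refine hlast _ (mem_filter.mpr ⟨huS, hu1⟩) (.head (Or.inl he) (.single (Or.inr
    ⟨fun hu => ?_, sdiff_ssubset hve.subset (singleton_nonempty v), by omega, heS, huS⟩)))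
  have hv : v ∈ e \ {v} := by
    rw [mm.fst_eq_of_mem hu he]
    exact mem_singleton_self v
  simp at hv

theorem exists_isFreePair (hne : S.Nonempty)
    (htop : ∀ τ ∈ S, (∀ ρ ∈ S, ρ.card ≤ τ.card) → τ ∉ mm.criticalCells) :
    ∃ σ τ, (σ, τ) ∈ mm.M ∧ IsFreePair S σ τ := by
  by_contra! hfree
  set T := S.filter fun τ => ∀ ρ ∈ S, ρ.card ≤ τ.card
  have hT : T.Nonempty := by
    obtain ⟨τ, hτ, hmax⟩ := exists_max_image S card hne
    exact ⟨τ, mem_filter.mpr ⟨hτ, hmax⟩⟩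
  have hstep : ∀ τ ∈ T, ∃ ρ ∈ T, TransGen (Function.swap (modifiedHasse S mm.M)) τ ρ := by
    intro τ hτ
    obtain ⟨hτS, hmax⟩ := mem_filter.mp hτ
    obtain ⟨σ, hστ⟩ : ∃ σ, (σ, τ) ∈ mm.M := by
      obtain ⟨G, hG | hG⟩ := mm.exists_mem_of_notMem_criticalCells hτS (htop τ hτS hmax)
      · have := (mm.cover_of_mem hG).2
        have := hmax G (mm.mem_right _ hG)
        omega
      · exact ⟨G, hG⟩
    obtain ⟨hστ', hcard⟩ := mm.cover_of_mem hστ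
    have hfacet : ∀ ρ ∈ S, ¬ τ ⊂ ρ := fun ρ hρ hτρ => (card_lt_card hτρ).not_ge (hmax ρ hρ)
    have : ¬ ∀ ρ ∈ S, σ ⊂ ρ → ρ = τ := fun hunique =>
      hfree σ τ hστ ⟨mm.mem_left _ hστ, hτS, hστ', hunique, hfacet⟩
    simp only [not_forall, exists_prop] at this
    obtain ⟨ρ, hρS, hσρ, hρτ⟩ := this
    have hρcard : ρ.card = τ.card := le_antisymm (hmax ρ hρS) (by
      have := card_lt_card hσρ
      omega)
    refine ⟨ρ, mem_filter.mpr ⟨hρS, fun x hx => (hmax x hx).trans hρcard.ge⟩,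
      .head (Or.inl hστ) (.single (Or.inr ⟨fun hσρM => hρτ (mm.snd_eq_of_mem hσρM hστ), hσρ,
        by omega, hρS, mm.mem_left _ hστ⟩))⟩
  obtain ⟨τ, hτ, hlast⟩ := exists_forall_not_transGen
    (fun x hx => mm.not_transGen_self x (transGen_swap.mp hx)) hT
  obtain ⟨ρ, hρ, hτρ⟩ := hstep τ hτ
  exact hlast ρ hρ hτρ

end MorseMatching

/-- a complex admitting a discrete Morse matching with exactly one
critical cell is collapsible. -/
theorem stmt8 (S : Finset (Finset V)) (hS : IsComplex S) (mm : MorseMatching S)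
    (h : mm.criticalCells.card = 1) :
    Collapsible S := by
  induction S using Finset.strongInduction with
  | H S ih =>
  have hne : S.Nonempty := (card_pos.mp (by omega)).mono mm.criticalCells_subset
  obtain ⟨v, hv⟩ := mm.exists_singleton_mem_criticalCells hS hne
  obtain ⟨c, hc⟩ := card_eq_one.mp h
  rw [hc, mem_singleton] at hv
  subst hv
  by_cases hdim : ∀ F ∈ S, F.card ≤ 1
  · rw [mm.criticalCells_eq_self_of_card_le_one hS hdim] at hc
    exact ⟨v, hc ▸ .refl _⟩
  obtain ⟨σ, τ, hστ, hfree⟩ := mm.exists_isFreePair hne fun τ _ hmax hτ => hdim fun F hF => by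
    rw [hc, mem_singleton] at hτ
    exact (hmax F hF).trans (hτ ▸ card_singleton v).le
  have hsub : S \ {σ, τ} ⊂ S := sdiff_ssubset
    (insert_subset_iff.mpr ⟨hfree.1, singleton_subset_iff.mpr hfree.2.1⟩) (insert_nonempty _ _)
  obtain ⟨w, hw⟩ := ih _ hsub (hS.sdiff_of_isFreePair hfree) (mm.erasePair hστ)
    (by rwa [MorseMatching.criticalCells_erasePair])
  exact ⟨w, .step σ τ hfree hw⟩
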